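/- Separation-of-variables identity: if γ : ℝ^m × ℝ → ℂ satisfies γ^♯(ξ/ω, ω) = f̂(ξ) conj(ρ^♯(ω)) for all ξ ∈ ℝ^m and ω ≠ 0 (equivalently γ^♯(a,ω) = f̂(ωa) conj(ρ^♯(ω))), then γ(a,b) = ∫_{ℝ^m} f(x) conj(ρ(a·x − b)) dx, i.e., γ equals the ridgelet transform R[f;ρ], assuming f ∈ L^1(ℝ^m), ρ ∈ Schwartz class, and all relevant integrals converge absolutely. -/

import Mathlib

open MeasureTheory
open scoped BigOperators

/-- One-dimensional Fourier transform `φ^♯(ω) = ∫ φ(b) e^{-i b ω} db`. -/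
noncomputable def FT1 (φ : ℝ → ℂ) (ω : ℝ) : ℂ :=
  ∫ b : ℝ, φ b * Complex.exp (-(Complex.I * ((b * ω : ℝ) : ℂ)))

/-- The Fourier transform `f̂(ξ) = ∫ f(x) e^{-i ξ·x} dx` on `ℝ^m`. -/
noncomputable def FTm (m : ℕ) (f : (Fin m → ℝ) → ℂ) (ξ : Fin m → ℝ) : ℂ :=
  ∫ x : Fin m → ℝ, f x * Complex.exp (-(Complex.I * ((∑ i, ξ i * x i : ℝ) : ℂ)))

/-- The ridgelet transform `R[f;ρ](a,b) = ∫ f(x) conj(ρ(a·x - b)) dx`. -/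
noncomputable def ridgelet (m : ℕ) (f : (Fin m → ℝ) → ℂ) (ρ : ℝ → ℂ)
    (a : Fin m → ℝ) (b : ℝ) : ℂ :=
  ∫ x : Fin m → ℝ, f x * (starRingEnd ℂ) (ρ ((∑ i, a i * x i) - b))

open Real FourierTransform

lemma FT1_eq (φ : ℝ → ℂ) (ω : ℝ) : FT1 φ ω = 𝓕 φ (ω * (2 * π)⁻¹) := by
  rw [Real.fourier_real_eq_integral_exp_smul, FT1]
  congr 1; ext b
  rw [smul_eq_mul, mul_comm]
  congr 1
  have h : -2 * π * b * (ω * (2 * π)⁻¹) = -(b * ω) := by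
    field_simp
  rw [h]
  push_cast
  ring

lemma FT1_inversion (φ : ℝ → ℂ) (hc : Continuous φ) (hi : Integrable φ)
    (hfi : Integrable (FT1 φ)) (b : ℝ) :
    φ b = (2 * π)⁻¹ • ∫ ω : ℝ, FT1 φ ω * Complex.exp (Complex.I * ((b * ω : ℝ) : ℂ)) := by
  have h2π : (2 * π) ≠ 0 := by positivity
  have h𝓕i : Integrable (𝓕 φ) := by
    have : Integrable fun ω : ℝ => 𝓕 φ (ω * (2 * π)⁻¹) := by
      have e : (fun ω : ℝ => 𝓕 φ (ω * (2 * π)⁻¹)) = FT1 φ := funext fun ω => (FT1_eq φ ω).symm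
      rw [e]; exact hfi
    exact (integrable_comp_mul_right_iff (𝓕 φ) (R := (2 * π)⁻¹) (by positivity)).1 this
  have hinv := hc.fourierInv_fourier_eq hi h𝓕i
  set h : ℝ → ℂ := fun ξ => 𝓕 φ ξ * Complex.exp ((↑(2 * π * (ξ * b)) : ℂ) * Complex.I) with hh
  have key : ∀ ω : ℝ, FT1 φ ω * Complex.exp (Complex.I * ((b * ω : ℝ) : ℂ))
      = h (ω * (2 * π)⁻¹) := by
    intro ω
    rw [hh, FT1_eq]
    congr 1
    have h1 : 2 * π * (ω * (2 * π)⁻¹ * b) = b * ω := by field_simp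
    rw [h1]
    push_cast
    ring
  calc φ b = 𝓕⁻ (𝓕 φ) b := by rw [hinv]
    _ = ∫ ξ : ℝ, h ξ := by
        rw [Real.fourierInv_eq']
        congr 1; ext ξ
        rw [hh, smul_eq_mul, mul_comm]
        norm_num [RCLike.inner_apply]
        left; ring_nf
    _ = (2 * π)⁻¹ • ∫ ω : ℝ, h (ω * (2 * π)⁻¹) := by
        rw [MeasureTheory.Measure.integral_comp_mul_right h ((2 * π)⁻¹), inv_inv,
          abs_of_pos Real.two_pi_pos, smul_smul, inv_mul_cancel₀ h2π, one_smul]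
    _ = (2 * π)⁻¹ • ∫ ω : ℝ, FT1 φ ω * Complex.exp (Complex.I * ((b * ω : ℝ) : ℂ)) := by
        simp_rw [key]

lemma FT1_schwartz_integrable (ρ : SchwartzMap ℝ ℂ) : Integrable (FT1 ⇑ρ) := by
  have e : FT1 ⇑ρ = fun ω => (SchwartzMap.fourierTransformCLM ℂ ρ) (ω * (2 * π)⁻¹) := by
    funext ω; rw [FT1_eq, SchwartzMap.fourierTransformCLM_apply, SchwartzMap.fourier_coe]
  rw [e]
  exact ((SchwartzMap.fourierTransformCLM ℂ ρ).integrable).comp_mul_right' (by positivity)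

lemma FT1_schwartz_continuous (ρ : SchwartzMap ℝ ℂ) : Continuous (FT1 ⇑ρ) := by
  have e : FT1 ⇑ρ = fun ω => (SchwartzMap.fourierTransformCLM ℂ ρ) (ω * (2 * π)⁻¹) := by
    funext ω; rw [FT1_eq, SchwartzMap.fourierTransformCLM_apply, SchwartzMap.fourier_coe]
  rw [e]
  exact (SchwartzMap.fourierTransformCLM ℂ ρ).continuous.comp (continuous_mul_right _)

lemma conj_inversion (ρ : SchwartzMap ℝ ℂ) (t : ℝ) :
    (starRingEnd ℂ) (ρ t) = (2 * π)⁻¹ •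
      ∫ ω : ℝ, (starRingEnd ℂ) (FT1 ⇑ρ ω) * Complex.exp (-(Complex.I * ((t * ω : ℝ) : ℂ))) := by
  have h := FT1_inversion ⇑ρ ρ.continuous (ρ.integrable) (FT1_schwartz_integrable ρ) t
  have := congrArg (starRingEnd ℂ) h
  rw [this]
  rw [Complex.real_smul, map_mul, Complex.conj_ofReal, ← integral_conj, ← Complex.real_smul]
  congr 1
  refine integral_congr_ae (Filter.Eventually.of_forall fun ω => ?_)
  show (starRingEnd ℂ) (FT1 (⇑ρ) ω * Complex.exp (Complex.I * ↑(t * ω))) = _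
  rw [map_mul, ← Complex.exp_conj]
  congr 1
  simp [map_mul, Complex.conj_I, Complex.conj_ofReal]

/-- Separation-of-variables identity: if `γ^♯(a,ω) = f̂(ωa) conj(ρ^♯(ω))`, then `γ`
equals the ridgelet transform `R[f;ρ]`. -/
theorem separation_of_variables_is_ridgelet (m : ℕ)
    (f : (Fin m → ℝ) → ℂ) (hf : Integrable f) (ρ : SchwartzMap ℝ ℂ)
    (γ : (Fin m → ℝ) → ℝ → ℂ)
    (hγc : ∀ a, Continuous (γ a)) (hγi : ∀ a, Integrable (γ a))
    (hγfi : ∀ a, Integrable (fun ω : ℝ => FT1 (γ a) ω))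
    (hsep : ∀ (a : Fin m → ℝ) (ω : ℝ),
      FT1 (γ a) ω = FTm m f (ω • a) * (starRingEnd ℂ) (FT1 (⇑ρ) ω)) :
    ∀ (a : Fin m → ℝ) (b : ℝ), γ a b = ridgelet m f (⇑ρ) a b := by
  intro a b
  have h2π : (2 * π) ≠ 0 := by positivity
  set s : (Fin m → ℝ) → ℝ := fun x => ∑ i, a i * x i with hs
  set G : ℝ → (Fin m → ℝ) → ℂ := fun ω x =>
    f x * ((starRingEnd ℂ) (FT1 ⇑ρ ω) *
      Complex.exp (Complex.I * (((b - s x) * ω : ℝ) : ℂ))) with hG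
  have hρfi := FT1_schwartz_integrable ρ
  have hρc := FT1_schwartz_continuous ρ
  have step2 : ∀ ω : ℝ, FT1 (γ a) ω * Complex.exp (Complex.I * ((b * ω : ℝ) : ℂ))
      = ∫ x, G ω x := by
    intro ω
    rw [hsep a ω, FTm, mul_assoc, ← MeasureTheory.integral_mul_const]
    refine integral_congr_ae (Filter.Eventually.of_forall fun x => ?_)
    have hsum : (∑ i, (ω • a) i * x i) = ω * s x := by
      simp [hs, Finset.mul_sum, mul_assoc]
    have hexp : Complex.exp (-(Complex.I * ((ω * s x : ℝ) : ℂ))) *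
        Complex.exp (Complex.I * ((b * ω : ℝ) : ℂ))
        = Complex.exp (Complex.I * (((b - s x) * ω : ℝ) : ℂ)) := by
      rw [← Complex.exp_add]; congr 1; push_cast; ring
    simp only [hG]
    rw [hsum, ← hexp]
    ring
  have hGint : Integrable (Function.uncurry G) (volume.prod volume) := by
    have hbound : Integrable
        (fun z : ℝ × (Fin m → ℝ) => ‖FT1 ⇑ρ z.1‖ * ‖f z.2‖) (volume.prod volume) :=
      hρfi.norm.mul_prod hf.norm
    refine hbound.mono' ?_ ?_
    · have h1 : AEStronglyMeasurable (fun z : ℝ × (Fin m → ℝ) => f z.2)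
          (volume.prod volume) := hf.1.comp_snd
      have h2 : Continuous (fun z : ℝ × (Fin m → ℝ) =>
          (starRingEnd ℂ) (FT1 ⇑ρ z.1) *
            Complex.exp (Complex.I * (((b - s z.2) * z.1 : ℝ) : ℂ))) := by
        have hscont : Continuous fun z : ℝ × (Fin m → ℝ) => s z.2 := by
          simp only [hs]
          exact continuous_finset_sum _ fun i _ =>
            continuous_const.mul ((continuous_apply i).comp continuous_snd)
        exact (Complex.continuous_conj.comp (hρc.comp continuous_fst)).mul
          (Complex.continuous_exp.comp (continuous_const.mul
            (Complex.continuous_ofReal.comp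
              ((continuous_const.sub hscont).mul continuous_fst))))
      exact h1.mul h2.aestronglyMeasurable
    · refine Filter.Eventually.of_forall fun z => le_of_eq ?_
      simp only [Function.uncurry, hG, norm_mul, RCLike.norm_conj,
        Complex.norm_exp]
      have : (Complex.I * (((b - s z.2) * z.1 : ℝ) : ℂ)).re = 0 := by simp
      rw [this, Real.exp_zero, mul_one, mul_comm]
  have hρinv : ∀ x, ∫ ω : ℝ, G ω x
      = (2 * π : ℝ) • (f x * (starRingEnd ℂ) (ρ (s x - b))) := by
    intro x
    have harg : ∀ ω : ℝ, Complex.exp (Complex.I * (((b - s x) * ω : ℝ) : ℂ))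
        = Complex.exp (-(Complex.I * (((s x - b) * ω : ℝ) : ℂ))) := by
      intro ω; congr 1; push_cast; ring
    have h1 : ∫ ω : ℝ, G ω x = f x * ∫ ω : ℝ, (starRingEnd ℂ) (FT1 ⇑ρ ω) *
        Complex.exp (-(Complex.I * (((s x - b) * ω : ℝ) : ℂ))) := by
      rw [← MeasureTheory.integral_const_mul]
      exact integral_congr_ae (Filter.Eventually.of_forall fun ω => by
        simp only [hG]; rw [harg ω])
    have h3 : ∫ ω : ℝ, (starRingEnd ℂ) (FT1 ⇑ρ ω) *
        Complex.exp (-(Complex.I * (((s x - b) * ω : ℝ) : ℂ)))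
        = (2 * π : ℝ) • (starRingEnd ℂ) (ρ (s x - b)) := by
      rw [conj_inversion ρ (s x - b), smul_smul, mul_inv_cancel₀ h2π, one_smul]
    rw [h1, h3, mul_smul_comm]
  calc γ a b
      = (2 * π)⁻¹ • ∫ ω : ℝ, FT1 (γ a) ω * Complex.exp (Complex.I * ((b * ω : ℝ) : ℂ)) :=
        FT1_inversion (γ a) (hγc a) (hγi a) (hγfi a) b
    _ = (2 * π)⁻¹ • ∫ ω : ℝ, ∫ x, G ω x := by simp_rw [step2]
    _ = (2 * π)⁻¹ • ∫ x, ∫ ω : ℝ, G ω x := by rw [integral_integral_swap hGint]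
    _ = (2 * π)⁻¹ • ∫ x, (2 * π : ℝ) • (f x * (starRingEnd ℂ) (ρ (s x - b))) := by
        simp_rw [hρinv]
    _ = ridgelet m f (⇑ρ) a b := by
        rw [integral_smul, smul_smul, inv_mul_cancel₀ h2π, one_smul, ridgelet]
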